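/- Let ℒ = { M(f) : f ∈ ℤ[u], f ≠ 0 } be the set of Mahler measures of nonzero one-variable integer polynomials, and define the derived sets inductively by ℒ^{(0)} = ℒ and ℒ^{(k)} = the set of limit points of ℒ^{(k−1)} (points every punctured neighborhood of which meets ℒ^{(k−1)}). If 1 is a limit point of ℒ, then ℒ^{(k)} = [1, ∞) for every k ≥ 1. -/

import Mathlib

open MeasureTheory

open Classical in
/-- The Mahler measure of a one-variable integer polynomial:
`M(f) = exp(∫₀¹ log |f(e^{2πit})| dt)`, with the convention `M(0) = 0`. -/
noncomputable def mahlerPoly (f : Polynomial ℤ) : ℝ :=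
  if f = 0 then 0 else
    Real.exp (∫ t in Set.Icc (0:ℝ) 1,
      Real.log (‖Polynomial.eval
        (Complex.exp (2 * (Real.pi : ℂ) * Complex.I * (t : ℂ)))
        (f.map (Int.castRingHom ℂ))‖))

/-- `ℒ`, the set of Mahler measures of nonzero one-variable integer polynomials. -/
def mahlerSet : Set ℝ := {x | ∃ f : Polynomial ℤ, f ≠ 0 ∧ mahlerPoly f = x}

/-! Since `ℒ` is closed under powers (`M` is multiplicative) and contains elements `a > 1`
arbitrarily close to `1`, consecutive powers `a ^ n ≤ x < a ^ (n + 1)` differ by at most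
`(a - 1) x`, so every `x ≥ 1` is a limit point of `ℒ`. As `M(f) ≥ |c_n| ≥ 1`, `ℒ ⊆ [1, ∞)`, so
`ℒ' = [1, ∞)`, and `[1, ∞) = ℒ' ⊆ [1, ∞)' ⊆ closure [1, ∞) = [1, ∞)` settles the higher
derived sets. -/

open Polynomial Real Set

theorem setIntegral_Icc_exp_two_pi_I_eq_circleAverage (g : ℂ → ℝ) :
    ∫ t in Icc (0 : ℝ) 1, g (Complex.exp (2 * π * Complex.I * t)) = circleAverage g 0 1 := by
  have hexp (t : ℝ) : Complex.exp (2 * π * Complex.I * t) = circleMap 0 1 (2 * π * t) := by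
    simp only [circleMap_zero, Complex.ofReal_one, one_mul, Complex.ofReal_mul,
      Complex.ofReal_ofNat]
    ring_nf
  rw [integral_Icc_eq_integral_Ioc, ← intervalIntegral.integral_of_le zero_le_one,
    circleAverage_def]
  simp_rw [hexp]
  rw [intervalIntegral.integral_comp_mul_left (fun θ ↦ g (circleMap 0 1 θ)) (by positivity),
    mul_zero, mul_one]

theorem mahlerPoly_eq_mahlerMeasure (f : ℤ[X]) :
    mahlerPoly f = (f.map (Int.castRingHom ℂ)).mahlerMeasure := by
  have hmap : f.map (Int.castRingHom ℂ) = 0 ↔ f = 0 :=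
    Polynomial.map_eq_zero_iff (RingHom.injective_int _)
  rw [mahlerPoly, mahlerMeasure, logMahlerMeasure_def,
    ← setIntegral_Icc_exp_two_pi_I_eq_circleAverage]
  simp only [ne_eq, hmap, ite_not]

theorem Polynomial.mahlerMeasure_pow (p : ℂ[X]) (n : ℕ) :
    (p ^ n).mahlerMeasure = p.mahlerMeasure ^ n := by
  induction n with
  | zero => simp
  | succ n ih => rw [pow_succ, mahlerMeasure_mul, ih, pow_succ]

theorem mahlerSet_subset_Ici_one : mahlerSet ⊆ Ici 1 := by
  rintro _ ⟨f, hf, rfl⟩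
  rw [mem_Ici, mahlerPoly_eq_mahlerMeasure]
  exact one_le_mahlerMeasure_of_ne_zero hf

theorem pow_mem_mahlerSet {a : ℝ} (ha : a ∈ mahlerSet) (n : ℕ) : a ^ n ∈ mahlerSet := by
  obtain ⟨f, hf, rfl⟩ := ha
  refine ⟨f ^ n, pow_ne_zero n hf, ?_⟩
  rw [mahlerPoly_eq_mahlerMeasure, mahlerPoly_eq_mahlerMeasure, Polynomial.map_pow,
    mahlerMeasure_pow]

theorem Ici_one_subset_derivedSet_of_pow_mem {S : Set ℝ} (hS : S ⊆ Ici 1)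
    (hpow : ∀ a ∈ S, ∀ n : ℕ, a ^ n ∈ S) (h1 : (1 : ℝ) ∈ derivedSet S) :
    Ici 1 ⊆ derivedSet S := by
  intro x (hx : 1 ≤ x)
  rw [mem_derivedSet, accPt_iff_nhds]
  intro U hU
  obtain ⟨ε, hε, hball⟩ := Metric.mem_nhds_iff.1 hU
  have hx0 : 0 < x := by linarith
  obtain ⟨a, ⟨ha_near, haS⟩, ha_ne⟩ :=
    accPt_iff_nhds.1 h1 _ (Metric.ball_mem_nhds 1 (div_pos hε hx0))
  have ha1 : 1 < a := lt_of_le_of_ne (hS haS) (Ne.symm ha_ne)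
  have ha_lt : (a - 1) * x < ε := by
    rw [Metric.mem_ball, Real.dist_eq, abs_of_pos (by linarith)] at ha_near
    rwa [lt_div_iff₀ hx0] at ha_near
  obtain ⟨n, hn_le, hn_lt⟩ := exists_nat_pow_near hx ha1
  refine ⟨a ^ (n + 1), ⟨hball ?_, hpow a haS (n + 1)⟩, hn_lt.ne'⟩
  rw [Metric.mem_ball, Real.dist_eq, abs_of_pos (by linarith)]
  calc a ^ (n + 1) - x ≤ a ^ (n + 1) - a ^ n := by linarith
    _ = (a - 1) * a ^ n := by ring
    _ ≤ (a - 1) * x := by gcongr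
    _ < ε := ha_lt

theorem derivedSet_iterate_eq_of_derivedSet_eq {X : Type*} [TopologicalSpace X] {A B : Set X}
    (hAB : A ⊆ B) (hB : IsClosed B) (h : derivedSet A = B) (k : ℕ) :
    derivedSet^[k + 1] A = B := by
  have hBB : derivedSet B = B :=
    subset_antisymm ((derivedSet_subset_closure B).trans hB.closure_subset)
      (h ▸ derivedSet_mono A B hAB)
  induction k with
  | zero => exact h
  | succ k ih => rw [Function.iterate_succ_apply', ih, hBB]

/-- If `1` is a limit point of `ℒ`, then every iterated derived set
`ℒ^{(k)}`, `k ≥ 1`, is the whole interval `[1, ∞)`.  Here `derivedSet S` is the set of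
limit points of `S`: the points every punctured neighborhood of which meets `S`. -/
theorem derivedSet_mahlerSet_eq_Ici (h : (1:ℝ) ∈ derivedSet mahlerSet) :
    ∀ k : ℕ, 1 ≤ k → derivedSet^[k] mahlerSet = Set.Ici (1:ℝ) := by
  have hderived : derivedSet mahlerSet = Ici 1 :=
    subset_antisymm
      ((derivedSet_subset_closure _).trans (closure_minimal mahlerSet_subset_Ici_one isClosed_Ici))
      (Ici_one_subset_derivedSet_of_pow_mem mahlerSet_subset_Ici_one
        (fun _ ha n ↦ pow_mem_mahlerSet ha n) h)
  intro k hk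
  obtain ⟨k, rfl⟩ := Nat.exists_eq_add_of_le' hk
  exact derivedSet_iterate_eq_of_derivedSet_eq mahlerSet_subset_Ici_one isClosed_Ici hderived k
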